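/- The alternating group A_5 does not satisfy the rewriting property P_7; that is, there exists a sequence of 7 elements x_1, x_2, ..., x_7 of A_5 such that for every non-identity permutation σ of {1,...,7} one has x_1 x_2 ⋯ x_7 ≠ x_{σ(1)} x_{σ(2)} ⋯ x_{σ(7)}. -/

import Mathlib

/-!
The rewritings `x ∘ σ` of a word `x` correspond to the index lists `ofFn σ`, which run over
`permutations' (finRange n)`, so non-rewritability of a fixed word is a finite check. For the
word `a5Word` the kernel evaluates all `7! = 5040` reordered products in `A₅` and finds the
original product only for the identity ordering.
-/

open Equiv List

def IsNonRewritable {M : Type*} [Monoid M] {n : ℕ} (x : Fin n → M) : Prop :=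
  ∀ σ : Perm (Fin n), σ ≠ 1 → (ofFn x).prod ≠ (ofFn (x ∘ σ)).prod

theorem Equiv.Perm.eq_one_of_ofFn_eq_finRange {n : ℕ} {σ : Perm (Fin n)}
    (h : ofFn σ = finRange n) : σ = 1 :=
  DFunLike.coe_injective <| ofFn_injective <| h.trans (ofFn_id n).symm

theorem isNonRewritable_of_forall_mem_permutations' {M : Type*} [Monoid M] {n : ℕ}
    (x : Fin n → M)
    (h : ∀ l ∈ (finRange n).permutations', (l.map x).prod = (ofFn x).prod → l = finRange n) :
    IsNonRewritable x := by
  intro σ hσ hprod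
  have hperm : ofFn σ ~ finRange n := ofFn_eq_map ▸ σ.map_finRange_perm
  have hmap : (ofFn σ).map x = ofFn (x ∘ σ) := map_ofFn
  exact hσ <| Perm.eq_one_of_ofFn_eq_finRange <|
    h _ (mem_permutations'.2 hperm) (hmap ▸ hprod.symm)

def a5Word : Fin 7 → alternatingGroup (Fin 5) :=
  ![⟨c[2, 3, 4], Perm.mem_alternatingGroup.2 (by decide)⟩,
    ⟨c[1, 2] * c[3, 4], Perm.mem_alternatingGroup.2 (by decide)⟩,
    ⟨c[0, 1, 2, 3, 4], Perm.mem_alternatingGroup.2 (by decide)⟩,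
    ⟨c[1, 4, 2], Perm.mem_alternatingGroup.2 (by decide)⟩,
    ⟨c[0, 2] * c[1, 4], Perm.mem_alternatingGroup.2 (by decide)⟩,
    ⟨c[0, 3, 1], Perm.mem_alternatingGroup.2 (by decide)⟩,
    ⟨c[0, 2, 3, 1, 4], Perm.mem_alternatingGroup.2 (by decide)⟩]

set_option maxRecDepth 100000 in
theorem isNonRewritable_a5Word : IsNonRewritable a5Word :=
  isNonRewritable_of_forall_mem_permutations' a5Word (by decide +kernel)

/-- `A₅` does not satisfy `P₇`: there is a non-rewritable word of length 7. -/
theorem A5_not_rewritable_seven :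
    ∃ x : Fin 7 → alternatingGroup (Fin 5),
      ∀ σ : Equiv.Perm (Fin 7), σ ≠ 1 →
        (List.ofFn x).prod ≠ (List.ofFn (x ∘ σ)).prod :=
  ⟨a5Word, isNonRewritable_a5Word⟩
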